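/- Let $x_1, \dots, x_m$ be real numbers with $\sum_{i=1}^m x_i = 0$. Then $\sum_{i=1}^m x_i^3 \le \frac{m-2}{m-1}\sqrt{\frac{m-1}{m}}\left(\sum_{i=1}^m x_i^2\right)^{3/2}$. -/

import Mathlib

/-!
Let `s` be the largest of the `x i` and `c = s / (m - 1)`. Since `(s - x) (x + c)² ≥ 0` for every
`x ≤ s`, each cube is dominated by a quadratic in `x`; summing it with `∑ x i = 0` bounds
`∑ x i ^ 3` by `(m - 2) / (m - 1) · s · ∑ x i ^ 2`, once we know that a trace-free vector
satisfies `m s² ≤ (m - 1) ∑ x i ^ 2` (Cauchy–Schwarz on the remaining `m - 1` entries).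
-/

open Finset

theorem cube_le_of_le {x s : ℝ} (c : ℝ) (h : x ≤ s) :
    x ^ 3 ≤ (s - 2 * c) * x ^ 2 + (2 * s * c - c ^ 2) * x + s * c ^ 2 := by
  nlinarith [mul_nonneg (sub_nonneg.2 h) (sq_nonneg (x + c))]

section TraceFree

variable {ι : Type*} [Fintype ι] {x : ι → ℝ}

theorem sum_cube_le_of_forall_le (hsum : ∑ i, x i = 0) {s : ℝ} (hs : ∀ i, x i ≤ s) (c : ℝ) :
    ∑ i, x i ^ 3 ≤ (s - 2 * c) * ∑ i, x i ^ 2 + Fintype.card ι * (s * c ^ 2) := by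
  calc ∑ i, x i ^ 3
      ≤ ∑ i, ((s - 2 * c) * x i ^ 2 + (2 * s * c - c ^ 2) * x i + s * c ^ 2) :=
        sum_le_sum fun i _ ↦ cube_le_of_le c (hs i)
    _ = (s - 2 * c) * ∑ i, x i ^ 2 + Fintype.card ι * (s * c ^ 2) := by
        simp only [sum_add_distrib, ← mul_sum, hsum, sum_const, card_univ, nsmul_eq_mul]
        ring

theorem sq_mul_card_le_of_sum_eq_zero (hsum : ∑ i, x i = 0) (i : ι) :
    x i ^ 2 * Fintype.card ι ≤ (Fintype.card ι - 1) * ∑ j, x j ^ 2 := by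
  classical
  have cauchy_schwarz := sq_sum_le_card_mul_sum_sq (s := univ.erase i) (f := x)
  rw [sum_erase_eq_sub (mem_univ i), sum_erase_eq_sub (mem_univ i), hsum,
    card_erase_of_mem (mem_univ i), card_univ,
    Nat.cast_pred (Fintype.card_pos_iff.2 ⟨i⟩)] at cauchy_schwarz
  linear_combination cauchy_schwarz

theorem sum_cube_le_mul_sum_sq (hcard : 1 < Fintype.card ι) (hsum : ∑ i, x i = 0) {s : ℝ}
    (hs : ∀ i, x i ≤ s) (hs₀ : 0 ≤ s)
    (hsq : s ^ 2 * Fintype.card ι ≤ (Fintype.card ι - 1) * ∑ i, x i ^ 2) :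
    ∑ i, x i ^ 3 ≤ (Fintype.card ι - 2) / (Fintype.card ι - 1) * s * ∑ i, x i ^ 2 := by
  have hn : (0 : ℝ) < Fintype.card ι - 1 := by
    have : (1 : ℝ) < Fintype.card ι := by exact_mod_cast hcard
    linarith
  set n : ℝ := (Fintype.card ι : ℝ)
  set Q := ∑ i, x i ^ 2
  set c := s / (n - 1)
  have hcs : c * (n - 1) = s := div_mul_cancel₀ s hn.ne'
  have hc₀ : 0 ≤ c := div_nonneg hs₀ hn.le
  have hcsn : c * (s * n) ≤ Q := by
    refine le_of_mul_le_mul_left ?_ hn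
    calc (n - 1) * (c * (s * n)) = s ^ 2 * n := by rw [← hcs]; ring
      _ ≤ (n - 1) * Q := hsq
  have hconst : n * (s * c ^ 2) ≤ c * Q :=
    calc n * (s * c ^ 2) = c * (c * (s * n)) := by ring
      _ ≤ c * Q := mul_le_mul_of_nonneg_left hcsn hc₀
  calc ∑ i, x i ^ 3 ≤ (s - 2 * c) * Q + n * (s * c ^ 2) := sum_cube_le_of_forall_le hsum hs c
    _ ≤ (s - c) * Q := by linarith
    _ = (n - 2) / (n - 1) * s * Q := by
        rw [← hcs]
        field_simp
        ring

theorem sum_cube_le_of_sum_eq_zero (hcard : 2 ≤ Fintype.card ι)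
    (hsum : ∑ i, x i = 0) :
    ∑ i, x i ^ 3 ≤ (Fintype.card ι - 2) / (Fintype.card ι - 1) *
      Real.sqrt ((Fintype.card ι - 1) / Fintype.card ι) * Real.sqrt (∑ i, x i ^ 2) ^ 3 := by
  have hn : (2 : ℝ) ≤ Fintype.card ι := by exact_mod_cast hcard
  set n : ℝ := (Fintype.card ι : ℝ)
  set Q := ∑ i, x i ^ 2
  have : Nonempty ι := Fintype.card_pos_iff.1 (by omega)
  obtain ⟨i₀, hi₀⟩ := Finite.exists_max x
  have hs₀ : 0 ≤ x i₀ := by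
    have hsum_le := sum_le_sum fun i (_ : i ∈ univ) ↦ hi₀ i
    rw [hsum, sum_const, card_univ, nsmul_eq_mul] at hsum_le
    exact nonneg_of_mul_nonneg_right hsum_le (by linarith)
  have hsq : x i₀ ^ 2 * n ≤ (n - 1) * Q := sq_mul_card_le_of_sum_eq_zero hsum i₀
  have hQ₀ : 0 ≤ Q := sum_nonneg fun i _ ↦ sq_nonneg (x i)
  have hs_le : x i₀ ≤ Real.sqrt ((n - 1) / n) * Real.sqrt Q := by
    rw [← Real.sqrt_mul (div_nonneg (by linarith) (by linarith))]
    refine Real.le_sqrt_of_sq_le ?_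
    rw [div_mul_eq_mul_div, le_div_iff₀ (by linarith)]
    linarith
  calc ∑ i, x i ^ 3 ≤ (n - 2) / (n - 1) * x i₀ * Q :=
        sum_cube_le_mul_sum_sq hcard hsum hi₀ hs₀ hsq
    _ ≤ (n - 2) / (n - 1) * (Real.sqrt ((n - 1) / n) * Real.sqrt Q) * Q := by
        gcongr
        exact div_nonneg (by linarith) (by linarith)
    _ = (n - 2) / (n - 1) * Real.sqrt ((n - 1) / n) * Real.sqrt Q ^ 3 := by
        rw [← Real.sq_sqrt hQ₀, Real.sqrt_sq (Real.sqrt_nonneg Q)]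
        ring

end TraceFree

theorem stmt_16 (m : ℕ) (hm : 2 ≤ m) (x : Fin m → ℝ) (hsum : ∑ i, x i = 0) :
    ∑ i, (x i) ^ 3 ≤
      ((m : ℝ) - 2) / ((m : ℝ) - 1) * Real.sqrt (((m : ℝ) - 1) / m) *
        Real.sqrt (∑ i, (x i) ^ 2) ^ 3 := by
  simpa using sum_cube_le_of_sum_eq_zero (by simpa using hm) hsum
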